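/- arXiv:1911.01289 — 3 statements merged into one kernel-verified Lean document; each statement's English description precedes it below -/
import Mathlib

section
/- Let g ≥ 1 and m ≥ 1 be integers, let ε ∈ {1, −1}, and let n₀ > n₁ > ⋯ > n_{2m} be integers with n₀ = g, n₁ = g − 1, and n_{2m−j} = −n_j for every 0 ≤ j ≤ 2m. Set Δ = ε·∑_{j=0}^{2m} (−1)^j t^{n_j} ∈ ℤ[t, t⁻¹]. Then every coefficient of the product Δ·(t⁻¹ + 1 + t) lies in {−1, 0, 1}, and moreover the coefficients of t^{g} and of t^{−g} in this product are both zero (these are the second and second-to-last coefficients, the extreme terms of the product being ±t^{g+1} and ±t^{−(g+1)}). -/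
open LaurentPolynomial

/-! Multiplying by `t⁻¹ + 1 + t` spreads each term `±t^{n_j}` over the exponents
`n_j - 1, n_j, n_j + 1`, so the coefficient of `t^i` is `ε` times the alternating sum of `(-1)^j`
over the indices `j` with `|n_j - i| ≤ 1`. As the `n_j` decrease strictly, these indices form an
interval, and an alternating sum of signs over an interval is `-1`, `0` or `1`. For `i = g`,
resp. `i = -g`, the interval is `{0, 1}`, resp. `{2m - 1, 2m}`, because the two extreme exponents
at each end are adjacent integers; there the signs cancel. -/

lemma abs_sum_Ico_neg_one_pow_le_one (a b : ℕ) :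
    |∑ j ∈ Finset.Ico a b, (-1 : ℤ) ^ j| ≤ 1 := by
  rcases le_or_gt a b with hab | hba
  · rw [abs_le]
    have hgeom := geom_sum_Ico_mul (-1 : ℤ) hab
    rcases neg_one_pow_eq_or ℤ a with ha | ha <;> rcases neg_one_pow_eq_or ℤ b with hb | hb <;>
      rw [ha, hb] at hgeom <;> constructor <;> linarith
  · simp [Finset.Ico_eq_empty_of_le hba.le]

lemma Finset.exists_eq_Ico_of_ordConnected {S : Finset ℕ} (hS : (S : Set ℕ).OrdConnected) :
    ∃ a b, S = Finset.Ico a b := by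
  rcases S.eq_empty_or_nonempty with rfl | hne
  · exact ⟨0, 0, rfl⟩
  refine ⟨S.min' hne, S.max' hne + 1, Finset.ext fun j => ⟨fun hj => ?_, fun hj => ?_⟩⟩
  · exact Finset.mem_Ico.2 ⟨S.min'_le j hj, Nat.lt_succ_of_le (S.le_max' j hj)⟩
  · obtain ⟨hmin, hmax⟩ := Finset.mem_Ico.1 hj
    exact hS.out (S.min'_mem hne) (S.max'_mem hne) ⟨hmin, Nat.le_of_lt_succ hmax⟩

section Exponents

variable {n : ℕ → ℤ} {N : ℕ}

lemma AntitoneOn.ordConnected_filter_abs_sub_le_one (hn : AntitoneOn n (Set.Iic N)) (i : ℤ) :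
    (({j ∈ Finset.range (N + 1) | |n j - i| ≤ 1} : Finset ℕ) : Set ℕ).OrdConnected := by
  refine ⟨fun a ha c hc b ⟨hab, hbc⟩ => ?_⟩
  simp only [Finset.coe_filter, Finset.mem_range, Set.mem_ofPred_eq, abs_le] at ha hc ⊢
  have mem : ∀ x ≤ c, x ∈ Set.Iic N := fun x hx => Set.mem_Iic.2 (by omega)
  have hnb : n c ≤ n b ∧ n b ≤ n a :=
    ⟨hn (mem b hbc) (mem c le_rfl) hbc, hn (mem a (hab.trans hbc)) (mem b hbc) hab⟩
  exact ⟨by omega, by omega, by omega⟩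

lemma StrictAntiOn.filter_abs_sub_apply_zero_le_one (hn : StrictAntiOn n (Set.Iic N)) (hN : 1 ≤ N)
    (h01 : n 1 = n 0 - 1) : {j ∈ Finset.range (N + 1) | |n j - n 0| ≤ 1} = {0, 1} := by
  ext j
  simp only [Finset.mem_filter, Finset.mem_range, Finset.mem_insert, Finset.mem_singleton, abs_le]
  constructor
  · rintro ⟨hj, hlo, -⟩
    by_contra hj01
    have : n j < n 1 := hn (Set.mem_Iic.2 (by omega)) (Set.mem_Iic.2 (by omega)) (by omega)
    omega
  · rintro (rfl | rfl) <;> omega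

lemma StrictAntiOn.filter_abs_sub_apply_last_le_one (hn : StrictAntiOn n (Set.Iic N)) (hN : 1 ≤ N)
    (hlast : n (N - 1) = n N + 1) :
    {j ∈ Finset.range (N + 1) | |n j - n N| ≤ 1} = {N - 1, N} := by
  ext j
  simp only [Finset.mem_filter, Finset.mem_range, Finset.mem_insert, Finset.mem_singleton, abs_le]
  constructor
  · rintro ⟨hj, -, hhi⟩
    by_contra hjN
    have : n (N - 1) < n j := hn (Set.mem_Iic.2 (by omega)) (Set.mem_Iic.2 (by omega)) (by omega)
    omega
  · rintro (rfl | rfl) <;> omega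

end Exponents

section Coefficients

variable {R : Type*} [Semiring R]

lemma coeff_C_mul_T_mul_T_neg_one_add_one_add_T_one (c : R) (e i : ℤ) :
    (C c * T e * (T (-1) + 1 + T 1)).coeff i = if |e - i| ≤ 1 then c else 0 := by
  simp only [mul_add, mul_one, mul_assoc, ← T_add, AddMonoidAlgebra.coeff_add, Finsupp.add_apply]
  simp only [← single_eq_C_mul_T, AddMonoidAlgebra.coeff_single, Finsupp.single_apply, abs_le]
  split_ifs <;> first | omega | simp

lemma coeff_sum_C_mul_T_mul_T_neg_one_add_one_add_T_one {ι : Type*} (s : Finset ι) (c : ι → R)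
    (e : ι → ℤ) (i : ℤ) :
    ((∑ j ∈ s, C (c j) * T (e j)) * (T (-1) + 1 + T 1)).coeff i =
      ∑ j ∈ s with |e j - i| ≤ 1, c j := by
  rw [Finset.sum_mul, AddMonoidAlgebra.coeff_sum, Finset.sum_apply', Finset.sum_filter]
  simp only [coeff_C_mul_T_mul_T_neg_one_add_one_add_T_one]

end Coefficients

theorem stmt_0_general (g : ℤ) (m : ℕ) (hm : 1 ≤ m) (ε : ℤ)
    (hε : ε = 1 ∨ ε = -1) (n : ℕ → ℤ)
    (hdec : ∀ j, j < 2 * m → n (j + 1) < n j)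
    (hn0 : n 0 = g) (hn1 : n 1 = g - 1)
    (hsym : ∀ j, j ≤ 2 * m → n (2 * m - j) = - n j)
    (Δ P : LaurentPolynomial ℤ)
    (hΔ : Δ = C ε * ∑ j ∈ Finset.range (2 * m + 1), (-1) ^ j * T (n j))
    (hP : P = Δ * (T (-1) + 1 + T 1)) :
    (∀ i : ℤ, P.coeff i ∈ ({-1, 0, 1} : Set ℤ)) ∧ P.coeff g = 0 ∧ P.coeff (-g) = 0 := by
  have hn : StrictAntiOn n (Set.Iic (2 * m)) := strictAntiOn_Iic_of_succ_lt hdec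
  have hcoeff (i : ℤ) :
      P.coeff i = ε * ∑ j ∈ Finset.range (2 * m + 1) with |n j - i| ≤ 1, (-1) ^ j := by
    rw [hP, hΔ, Finset.mul_sum, Finset.mul_sum,
      ← coeff_sum_C_mul_T_mul_T_neg_one_add_one_add_T_one]
    simp only [← mul_assoc, map_mul, map_pow, map_neg, map_one]
  have hlast : n (2 * m) = -g := by simpa [hn0] using hsym 0 (by omega)
  have hpen : n (2 * m - 1) = n (2 * m) + 1 := by have := hsym 1 (by omega); omega
  refine ⟨fun i => ?_, ?_, ?_⟩
  · obtain ⟨a, b, hab⟩ :=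
      Finset.exists_eq_Ico_of_ordConnected (hn.antitoneOn.ordConnected_filter_abs_sub_le_one i)
    have hsum := abs_le.1 (abs_sum_Ico_neg_one_pow_le_one a b)
    rw [hcoeff, hab]
    rcases hε with rfl | rfl <;> simp only [Set.mem_insert_iff, Set.mem_singleton_iff] <;> omega
  · rw [hcoeff, ← hn0, hn.filter_abs_sub_apply_zero_le_one (by omega) (by omega),
      Finset.sum_pair zero_ne_one]
    simp
  · obtain ⟨k, hk⟩ : ∃ k, 2 * m = k + 1 := ⟨2 * m - 1, by omega⟩
    rw [hcoeff, ← hlast, hn.filter_abs_sub_apply_last_le_one (by omega) hpen,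
      Finset.sum_pair (by omega), hk]
    simp [pow_succ]

/-- Lemma `productcoeff`: if `Δ` has the shape of the symmetric Alexander polynomial of an
L-space knot of genus `g` (nonzero coefficients `±1` alternating in sign, extreme terms at
`t^{±g}`, the coefficient of `t^{g-1}` nonzero), then all coefficients of
`Δ * (t⁻¹ + 1 + t)` lie in `{-1, 0, 1}` and the coefficients of `t^g` and `t^{-g}`
in the product vanish. -/
theorem stmt_0 (g : ℤ) (hg : 1 ≤ g) (m : ℕ) (hm : 1 ≤ m) (ε : ℤ)
    (hε : ε = 1 ∨ ε = -1) (n : ℕ → ℤ)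
    (hdec : ∀ j, j < 2 * m → n (j + 1) < n j)
    (hn0 : n 0 = g) (hn1 : n 1 = g - 1)
    (hsym : ∀ j, j ≤ 2 * m → n (2 * m - j) = - n j)
    (Δ P : LaurentPolynomial ℤ)
    (hΔ : Δ = C ε * ∑ j ∈ Finset.range (2 * m + 1), (-1) ^ j * T (n j))
    (hP : P = Δ * (T (-1) + 1 + T 1)) :
    (∀ i : ℤ, P.coeff i ∈ ({-1, 0, 1} : Set ℤ)) ∧ P.coeff g = 0 ∧ P.coeff (-g) = 0 :=
  stmt_0_general g m hm ε hε n hdec hn0 hn1 hsym Δ P hΔ hP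
end

section
/- Let G be a group and let a, b ∈ G satisfy the braid relation a·b·a = b·a·b. Then for all integers k and p, the element (a·b·a)^{2k}·a^{p}·b^{−1} is conjugate in G to (b·a)^{3k−1}·a^{p+1}. -/
/-- If `a, b` satisfy the braid relation, then for all integers `k, p` the element
`(a·b·a)^{2k}·a^p·b⁻¹` is conjugate to `(b·a)^{3k-1}·a^{p+1}`. -/
theorem stmt_5 {G : Type*} [Group G] (a b : G) (h : a * b * a = b * a * b)
    (k p : ℤ) :
    IsConj ((a * b * a) ^ (2 * k) * a ^ p * b⁻¹)
      ((b * a) ^ (3 * k - 1) * a ^ (p + 1)) := by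
  have e1 : (a * b * a) * a = b * (a * b * a) := by nth_rewrite 1 [h]; group
  have e2 : (a * b * a) * b = a * (a * b * a) := by nth_rewrite 2 [h]; group
  have h2eq : (a * b * a) ^ (2 : ℤ) = (a * b * a) * (a * b * a) := by
    norm_num [zpow_ofNat, pow_succ, mul_assoc]
  have hsq : (a * b * a) ^ (2 : ℤ) = (b * a) ^ (3 : ℤ) := by
    rw [h2eq]
    nth_rewrite 1 [h]
    norm_num [zpow_ofNat, pow_succ, mul_assoc]
  have hΔ2 : (a * b * a) * (a * b * a) * a = a * ((a * b * a) * (a * b * a)) := by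
    rw [mul_assoc, e1, ← mul_assoc, e2, mul_assoc]
  have hca : Commute a ((a * b * a) ^ (2 : ℤ)) := by
    rw [Commute, SemiconjBy, h2eq]; exact hΔ2.symm
  have hck : a ^ (-(p + 1)) * (a * b * a) ^ (2 * k)
      = (a * b * a) ^ (2 * k) * a ^ (-(p + 1)) := by
    have : Commute (a ^ (-(p + 1))) ((a * b * a) ^ (2 * k)) := by
      rw [zpow_mul]
      exact (hca.zpow_right k).zpow_left _
    exact this.eq
  have h3k : (b * a) ^ (3 * k - 1) = (a * b * a) ^ (2 * k) * (b * a)⁻¹ := by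
    rw [zpow_sub, zpow_one, zpow_mul, zpow_mul, hsq]
  rw [isConj_iff, h3k]
  refine ⟨a ^ (-(p + 1)), ?_⟩
  have hm : a ^ (-(p + 1)) * a ^ p = a⁻¹ := by
    rw [← zpow_add, show -(p + 1) + p = -1 by ring, zpow_neg_one]
  calc a ^ (-(p + 1)) * ((a * b * a) ^ (2 * k) * a ^ p * b⁻¹) * (a ^ (-(p + 1)))⁻¹
      = (a ^ (-(p + 1)) * (a * b * a) ^ (2 * k)) * (a ^ p * b⁻¹ * (a ^ (-(p + 1)))⁻¹) := by
        group
    _ = ((a * b * a) ^ (2 * k) * a ^ (-(p + 1))) * (a ^ p * b⁻¹ * (a ^ (-(p + 1)))⁻¹) := by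
        rw [hck]
    _ = (a * b * a) ^ (2 * k) * ((a ^ (-(p + 1)) * a ^ p) * (b⁻¹ * a ^ (p + 1))) := by
        rw [← zpow_neg, neg_neg]; group
    _ = (a * b * a) ^ (2 * k) * (a⁻¹ * (b⁻¹ * a ^ (p + 1))) := by rw [hm]
    _ = (a * b * a) ^ (2 * k) * (b * a)⁻¹ * a ^ (p + 1) := by
        rw [mul_inv_rev]; group
end

section
/- Let B₃ = ⟨σ₁, σ₂ | σ₁σ₂σ₁ = σ₂σ₁σ₂⟩ be the braid group on three strands and C = (σ₁σ₂)³. Then every b ∈ B₃ is conjugate to a braid in exactly one of the following five families: (1) C^k σ₁^{p₁} σ₂^{−q₁} ⋯ σ₁^{p_s} σ₂^{−q_s}, where k ∈ ℤ and s and all p_i, q_i are positive integers; (2) C^k σ₁^{p}, where k, p ∈ ℤ; (3) C^k σ₁σ₂, where k ∈ ℤ; (4) C^k σ₁σ₂σ₁, where k ∈ ℤ; (5) C^k σ₁σ₂σ₁σ₂, where k ∈ ℤ. That is, b is conjugate to at least one element of some family, and b cannot be conjugate simultaneously to elements of two distinct families among (1)–(5). -/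
/-- The single braid relation `σ₁σ₂σ₁ = σ₂σ₁σ₂` (as an element of the free group on two
generators), presenting the braid group `B₃`. -/
def braidRels : Set (FreeGroup (Fin 2)) :=
  {FreeGroup.of 0 * FreeGroup.of 1 * FreeGroup.of 0 *
    (FreeGroup.of 1 * FreeGroup.of 0 * FreeGroup.of 1)⁻¹}

/-- The braid group on three strands, `B₃ = ⟨σ₁, σ₂ ∣ σ₁σ₂σ₁ = σ₂σ₁σ₂⟩`. -/
abbrev BraidGroup3 := PresentedGroup braidRels

/-- The generator `σ₁` of `B₃`. -/
def σ₁ : BraidGroup3 := PresentedGroup.of 0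

/-- The generator `σ₂` of `B₃`. -/
def σ₂ : BraidGroup3 := PresentedGroup.of 1

/-- The central element `C = (σ₁σ₂)³` of `B₃`. -/
def Cbraid : BraidGroup3 := (σ₁ * σ₂) ^ 3

/-- The five families of Schreier's conjugacy normal form for 3-braids:
(0) generic braids `C^k σ₁^{p₁} σ₂^{-q₁} ⋯ σ₁^{p_s} σ₂^{-q_s}` with `s, pᵢ, qᵢ > 0`;
(1) `C^k σ₁^p` with `k, p ∈ ℤ`; (2) `C^k σ₁σ₂`; (3) `C^k σ₁σ₂σ₁`; (4) `C^k σ₁σ₂σ₁σ₂`. -/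
def SchreierForm : Fin 5 → BraidGroup3 → Prop
  | 0, b => ∃ (k : ℤ) (s : ℕ) (p q : ℕ → ℕ), 0 < s ∧ (∀ i < s, 0 < p i ∧ 0 < q i) ∧
      b = Cbraid ^ k *
        ((List.range s).map (fun i => σ₁ ^ (p i) * σ₂ ^ (-(q i : ℤ)))).prod
  | 1, b => ∃ k p : ℤ, b = Cbraid ^ k * σ₁ ^ p
  | 2, b => ∃ k : ℤ, b = Cbraid ^ k * (σ₁ * σ₂)
  | 3, b => ∃ k : ℤ, b = Cbraid ^ k * (σ₁ * σ₂ * σ₁)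
  | 4, b => ∃ k : ℤ, b = Cbraid ^ k * (σ₁ * σ₂ * σ₁ * σ₂)

/-!
Put `Δ = σ₁σ₂σ₁`. Then `Δ² = C` is central, `Δσ₁ = σ₂Δ`, and every braid is `C^k` times a word
in the syllables `σ₁^m Δ`. Up to conjugation such a word is cyclic, and the relations
`σ₁Δσ₁ = Δσ₁⁻¹Δ` and `Δ² = C` rewrite it, up to conjugation and powers of `C`, into one of
smaller weight `2 ∑ |mᵢ| + length` unless it is empty, a single syllable with `|m| ≤ 1`, two
syllables one of which is `Δ`, or has cyclically alternating signs; these are exactly the five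
families.

The families are told apart by two conjugacy invariants. Under `B₃ → SL(2, ℤ)`,
`σ₁ ↦ [[1, 1], [0, 1]]`, `σ₂ ↦ [[1, 0], [-1, 1]]`, which sends `C` to `-1`, the square of the
trace is `≥ 9`, `4`, `1`, `0`, `1` on families (1)–(5); the exponent sum modulo 6 separates (3)
from (5).
-/

theorem isConj_mul_comm {G : Type*} [Group G] (a b : G) : IsConj (a * b) (b * a) :=
  isConj_iff.mpr ⟨a⁻¹, by group⟩

theorem IsConj.mul_left_of_commute {G : Type*} [Group G] {z x y : G} (hz : ∀ g, Commute z g)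
    (h : IsConj x y) : IsConj (z * x) (z * y) := by
  obtain ⟨g, rfl⟩ := isConj_iff.mp h
  exact isConj_iff.mpr ⟨g, by rw [← mul_assoc g, ← (hz g).eq]; group⟩

theorem braid_relation : σ₁ * σ₂ * σ₁ = σ₂ * σ₁ * σ₂ := by
  have h := PresentedGroup.one_of_mem (Set.mem_singleton _ : _ ∈ braidRels)
  simp only [map_mul, map_inv] at h
  exact mul_inv_eq_one.mp h

noncomputable def Δ : BraidGroup3 := σ₁ * σ₂ * σ₁

theorem Δ_mul_σ₁ : Δ * σ₁ = σ₂ * Δ :=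
  calc Δ * σ₁ = σ₂ * σ₁ * σ₂ * σ₁ := by rw [Δ, braid_relation]
    _ = σ₂ * Δ := by rw [Δ]; group

theorem Δ_mul_σ₂ : Δ * σ₂ = σ₁ * Δ :=
  calc Δ * σ₂ = σ₁ * (σ₂ * σ₁ * σ₂) := by rw [Δ]; group
    _ = σ₁ * Δ := by rw [Δ, braid_relation]

theorem Δ_mul_Δ : Δ * Δ = Cbraid := by
  rw [Cbraid, pow_three]; nth_rw 2 [Δ]; rw [braid_relation, Δ]; group

theorem commute_Cbraid (x : BraidGroup3) : Commute Cbraid x := by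
  have hσ₁ : Cbraid * σ₁ = σ₁ * Cbraid := by
    rw [← Δ_mul_Δ, mul_assoc, Δ_mul_σ₁, ← mul_assoc, Δ_mul_σ₂, mul_assoc]
  have hσ₂ : Cbraid * σ₂ = σ₂ * Cbraid := by
    rw [← Δ_mul_Δ, mul_assoc, Δ_mul_σ₂, ← mul_assoc, Δ_mul_σ₁, mul_assoc]
  refine (Subgroup.mem_centralizer_singleton_iff.mp
    (PresentedGroup.generated_by _ (Subgroup.centralizer {Cbraid}) (fun i => ?_) x)).symm
  rw [Subgroup.mem_centralizer_singleton_iff]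
  fin_cases i
  exacts [hσ₁.symm, hσ₂.symm]

theorem Δ_mul_σ₁_zpow (m : ℤ) : Δ * σ₁ ^ m = σ₂ ^ m * Δ :=
  SemiconjBy.zpow_right Δ_mul_σ₁ m

theorem Δ_mul_σ₁_zpow_mul_Δ (m : ℤ) : Δ * σ₁ ^ m * Δ = Cbraid * σ₂ ^ m := by
  rw [Δ_mul_σ₁_zpow, mul_assoc, Δ_mul_Δ, (commute_Cbraid _).eq]

theorem σ₁_mul_Δ_mul_σ₁ : σ₁ * Δ * σ₁ = Δ * σ₁⁻¹ * Δ :=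
  calc σ₁ * Δ * σ₁ = σ₁ * (σ₂ * σ₁ * σ₂) * σ₁ := by rw [Δ, braid_relation]
    _ = Δ * σ₁⁻¹ * Δ := by rw [Δ]; group

noncomputable def syllable (m : ℤ) : BraidGroup3 := σ₁ ^ m * Δ

noncomputable def syllableWord (L : List ℤ) : BraidGroup3 := (L.map syllable).prod

@[simp] theorem syllableWord_nil : syllableWord [] = 1 := rfl

@[simp] theorem syllableWord_cons (m : ℤ) (L : List ℤ) :
    syllableWord (m :: L) = syllable m * syllableWord L := by
  simp [syllableWord]

@[simp] theorem syllableWord_append (L M : List ℤ) :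
    syllableWord (L ++ M) = syllableWord L * syllableWord M := by
  simp [syllableWord]

theorem zpow_mul_syllable (n m : ℤ) : σ₁ ^ n * syllable m = syllable (n + m) := by
  rw [syllable, syllable, zpow_add, mul_assoc]

theorem syllable_mul_syllable_zero (a : ℤ) : syllable a * syllable 0 = Cbraid * σ₁ ^ a := by
  rw [syllable, syllable, zpow_zero, one_mul, mul_assoc, Δ_mul_Δ, (commute_Cbraid _).eq]

theorem syllable_zero_mul_syllable (m : ℤ) : syllable 0 * syllable m = Cbraid * σ₂ ^ m := by
  rw [syllable, syllable, zpow_zero, one_mul, ← mul_assoc, Δ_mul_σ₁_zpow_mul_Δ]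

theorem syllable_mul_syllable_neg (p q : ℤ) :
    syllable p * syllable (-q) = Cbraid * (σ₁ ^ p * σ₂ ^ (-q)) := by
  rw [syllable, syllable, mul_assoc, ← mul_assoc Δ, Δ_mul_σ₁_zpow_mul_Δ, ← mul_assoc,
    ← (commute_Cbraid _).eq, mul_assoc]

theorem syllable_mul_syllable_eq_insert_neg_one (a m : ℤ) :
    syllable a * syllable m = syllable (a - 1) * syllable (-1) * syllable (m - 1) :=
  calc syllable a * syllable m = σ₁ ^ (a - 1) * (σ₁ * Δ * σ₁) * (σ₁ ^ (m - 1) * Δ) := by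
        rw [syllable, syllable]; group
    _ = _ := by rw [σ₁_mul_Δ_mul_σ₁, syllable, syllable, syllable]; group

theorem syllable_mul_syllable_eq_insert_one (a m : ℤ) :
    syllable a * syllable m = Cbraid⁻¹ * (syllable (a + 1) * syllable 1 * syllable (m + 1)) := by
  have hσ₂ : σ₂ ^ (1 : ℤ) = σ₁⁻¹ * Δ * σ₁⁻¹ := by rw [Δ]; group
  rw [eq_inv_mul_iff_mul_eq, eq_comm]
  calc syllable (a + 1) * syllable 1 * syllable (m + 1)
        = σ₁ ^ (a + 1) * (Δ * σ₁ ^ (1 : ℤ) * Δ * (σ₁ ^ (m + 1) * Δ)) := by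
          simp only [syllable]; group
    _ = Cbraid * (σ₁ ^ (a + 1) * (σ₂ ^ (1 : ℤ) * (σ₁ ^ (m + 1) * Δ))) := by
          rw [Δ_mul_σ₁_zpow_mul_Δ, mul_assoc Cbraid, ← (commute_Cbraid _).left_comm]
    _ = Cbraid * (syllable a * syllable m) := by rw [hσ₂, syllable, syllable]; group

theorem σ₁_inv_mul_syllable_mul_σ₁ (m : ℤ) :
    σ₁⁻¹ * syllable m * σ₁ = syllable (m - 2) * syllable (-1) :=
  calc σ₁⁻¹ * syllable m * σ₁ = σ₁ ^ (m - 2) * (σ₁ * Δ * σ₁) := by rw [syllable]; group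
    _ = _ := by rw [σ₁_mul_Δ_mul_σ₁, syllable, syllable]; group

theorem σ₁_mul_syllable_mul_σ₁_inv (m : ℤ) :
    σ₁ * syllable m * σ₁⁻¹ = Cbraid⁻¹ * (syllable (m + 2) * syllable 1) := by
  rw [eq_inv_mul_iff_mul_eq, eq_comm]
  calc syllable (m + 2) * syllable 1 = σ₁ ^ (m + 2) * (Δ * σ₁ ^ (1 : ℤ) * Δ) := by
        simp only [syllable]; group
    _ = Cbraid * (σ₁ ^ (m + 2) * σ₂ ^ (1 : ℤ)) := by
        rw [Δ_mul_σ₁_zpow_mul_Δ, ← (commute_Cbraid _).left_comm]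
    _ = Cbraid * (σ₁ * syllable m * σ₁⁻¹) := by rw [syllable, Δ]; group

theorem exists_eq_Cbraid_zpow_mul_syllableWord (b : BraidGroup3) :
    ∃ (k : ℤ) (L : List ℤ), b = Cbraid ^ k * syllableWord L := by
  have hgen (i : Fin 2) (e : ℤ) :
      ∃ (k : ℤ) (L : List ℤ), PresentedGroup.of i ^ e = Cbraid ^ k * syllableWord L := by
    refine ⟨-1, ?_⟩
    fin_cases i
    · exact ⟨[e, 0], show σ₁ ^ e = _ by simp [← mul_assoc, syllable_mul_syllable_zero]⟩
    · exact ⟨[0, e], show σ₂ ^ e = _ by simp [← mul_assoc, syllable_zero_mul_syllable]⟩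
  have hb : b ∈ Subgroup.closure (Set.range PresentedGroup.of) := by simp
  induction hb using Subgroup.closure_induction'' with
  | mem _ hx => obtain ⟨i, rfl⟩ := hx; simpa using hgen i 1
  | inv_mem _ hx => obtain ⟨i, rfl⟩ := hx; simpa using hgen i (-1)
  | one => exact ⟨0, [], by simp⟩
  | mul x y _ _ hx hy =>
    obtain ⟨k, L, rfl⟩ := hx
    obtain ⟨k', L', rfl⟩ := hy
    refine ⟨k + k', L ++ L', ?_⟩
    rw [syllableWord_append, zpow_add, mul_assoc, ← mul_assoc (syllableWord L),
      ← ((commute_Cbraid _).zpow_left k').eq]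
    group

theorem isConj_syllableWord_of_isRotated {L L' : List ℤ} (h : L ~r L') :
    IsConj (syllableWord L) (syllableWord L') := by
  obtain ⟨n, rfl⟩ := h
  rw [List.rotate_eq_drop_append_take_mod]
  nth_rw 1 [← List.take_append_drop (n % L.length) L]
  simpa only [syllableWord_append] using isConj_mul_comm _ _

def HasSchreierForm (b : BraidGroup3) : Prop := ∃ i c, SchreierForm i c ∧ IsConj b c

theorem SchreierForm.Cbraid_zpow_mul {i : Fin 5} {c : BraidGroup3} (h : SchreierForm i c)
    (j : ℤ) : SchreierForm i (Cbraid ^ j * c) := by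
  fin_cases i
  · obtain ⟨k, s, p, q, hs, hpq, rfl⟩ := h
    exact ⟨j + k, s, p, q, hs, hpq, by simp only [zpow_add, mul_assoc]⟩
  · obtain ⟨k, p, rfl⟩ := h
    exact ⟨j + k, p, by simp only [zpow_add, mul_assoc]⟩
  all_goals
    obtain ⟨k, rfl⟩ := h
    exact ⟨j + k, by simp only [zpow_add, mul_assoc]⟩

theorem HasSchreierForm.of_isConj {b b' : BraidGroup3} (h : IsConj b b')
    (h' : HasSchreierForm b') : HasSchreierForm b :=
  let ⟨i, c, hc, hb'c⟩ := h'
  ⟨i, c, hc, h.trans hb'c⟩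

theorem HasSchreierForm.Cbraid_zpow_mul {b : BraidGroup3} (h : HasSchreierForm b) (j : ℤ) :
    HasSchreierForm (Cbraid ^ j * b) :=
  let ⟨i, c, hc, hbc⟩ := h
  ⟨i, Cbraid ^ j * c, hc.Cbraid_zpow_mul j,
    hbc.mul_left_of_commute fun g => (commute_Cbraid g).zpow_left j⟩

theorem hasSchreierForm_Cbraid_zpow_mul_σ₁_zpow (k p : ℤ) :
    HasSchreierForm (Cbraid ^ k * σ₁ ^ p) :=
  ⟨1, _, ⟨k, p, rfl⟩, .refl _⟩

theorem hasSchreierForm_syllableWord_nil : HasSchreierForm (syllableWord []) := by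
  simpa using hasSchreierForm_Cbraid_zpow_mul_σ₁_zpow 0 0

theorem hasSchreierForm_syllableWord_pair_zero (a : ℤ) :
    HasSchreierForm (syllableWord [a, 0]) := by
  simpa [syllable_mul_syllable_zero] using hasSchreierForm_Cbraid_zpow_mul_σ₁_zpow 1 a

theorem hasSchreierForm_syllableWord_neg_one : HasSchreierForm (syllableWord [-1]) := by
  refine ⟨2, σ₁ * σ₂, ⟨0, by simp⟩, isConj_iff.mpr ⟨σ₁, ?_⟩⟩
  simp only [syllableWord_cons, syllableWord_nil, mul_one, syllable, Δ]
  group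

theorem hasSchreierForm_syllableWord_zero : HasSchreierForm (syllableWord [0]) := by
  refine ⟨3, σ₁ * σ₂ * σ₁, ⟨0, by simp⟩, ?_⟩
  rw [syllableWord_cons, syllableWord_nil, mul_one, syllable, zpow_zero, one_mul, Δ]

theorem hasSchreierForm_syllableWord_one : HasSchreierForm (syllableWord [1]) := by
  refine ⟨4, σ₁ * σ₂ * σ₁ * σ₂, ⟨0, by simp⟩, ?_⟩
  rw [syllableWord_cons, syllableWord_nil, mul_one, syllable, zpow_one, ← Δ_mul_σ₂, Δ]

def alternatingSyllables (pl : List (ℕ × ℕ)) : List ℤ :=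
  pl.flatMap fun pq => [(pq.1 : ℤ), -(pq.2 : ℤ)]

theorem syllableWord_alternatingSyllables (pl : List (ℕ × ℕ)) :
    syllableWord (alternatingSyllables pl) =
      Cbraid ^ pl.length * (pl.map fun pq => σ₁ ^ pq.1 * σ₂ ^ (-(pq.2 : ℤ))).prod := by
  induction pl with
  | nil => simp [alternatingSyllables]
  | cons pq pl ih =>
    simp only [alternatingSyllables, List.flatMap_cons, List.cons_append, List.nil_append,
      syllableWord_cons] at ih ⊢
    rw [ih, ← mul_assoc, syllable_mul_syllable_neg, List.map_cons, List.prod_cons,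
      List.length_cons, pow_succ', mul_assoc, mul_assoc, mul_assoc,
      ((commute_Cbraid _).pow_left _).left_comm, zpow_natCast, mul_assoc]

theorem hasSchreierForm_syllableWord_alternatingSyllables {pl : List (ℕ × ℕ)} (hne : pl ≠ [])
    (hpos : ∀ pq ∈ pl, 0 < pq.1 ∧ 0 < pq.2) :
    HasSchreierForm (syllableWord (alternatingSyllables pl)) := by
  refine ⟨0, _, ⟨pl.length, pl.length, fun i => (pl.getD i 0).1, fun i => (pl.getD i 0).2,
    List.length_pos_iff.mpr hne, fun i hi => ?_, ?_⟩, .refl _⟩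
  · dsimp only
    rw [List.getD_eq_getElem _ _ hi]
    exact hpos _ (List.getElem_mem hi)
  · rw [syllableWord_alternatingSyllables, zpow_natCast]
    congr 2
    apply List.ext_getElem (by simp)
    intro i hi _
    simp [List.getElem?_eq_getElem (List.length_map _ ▸ hi : i < pl.length)]

theorem exists_eq_alternatingSyllables {L : List ℤ} (hL : L.IsChain fun a b => a * b < 0)
    (hhead : ∀ x ∈ L.head?, 0 < x) (hlast : ∀ x ∈ L.getLast?, x < 0) :
    ∃ pl : List (ℕ × ℕ), (∀ pq ∈ pl, 0 < pq.1 ∧ 0 < pq.2) ∧ L = alternatingSyllables pl :=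
  match L, hL, hhead, hlast with
  | [], _, _, _ => ⟨[], by simp, rfl⟩
  | [a], _, hhead, hlast => absurd (hhead a rfl) (hlast a rfl).not_gt
  | a :: b :: R, hL, hhead, hlast => by
    have ha := hhead a rfl
    obtain ⟨hab, hbR⟩ := List.isChain_cons_cons.mp hL
    have hb : b < 0 := by nlinarith
    obtain ⟨pl, hpos, rfl⟩ := exists_eq_alternatingSyllables (L := R) hbR.tail
      (fun r hr => by have := (List.isChain_cons.mp hbR).1 r hr; nlinarith)
      (fun r hr => hlast r (by cases R <;> simp_all))
    refine ⟨(a.toNat, b.natAbs) :: pl, ?_, ?_⟩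
    · simp only [List.mem_cons, forall_eq_or_imp]; exact ⟨by omega, hpos⟩
    · simp [alternatingSyllables, Int.toNat_of_nonneg ha.le, abs_of_neg hb]

def syllableWeight (L : List ℤ) : ℕ := 2 * (L.map Int.natAbs).sum + L.length

@[simp] theorem syllableWeight_nil : syllableWeight [] = 0 := rfl

theorem syllableWeight_cons (m : ℤ) (L : List ℤ) :
    syllableWeight (m :: L) = 2 * m.natAbs + syllableWeight L + 1 := by
  simp only [syllableWeight, List.map_cons, List.sum_cons, List.length_cons]; ring

theorem List.IsRotated.syllableWeight_eq {L L' : List ℤ} (h : L ~r L') :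
    syllableWeight L = syllableWeight L' := by
  rw [syllableWeight, syllableWeight, (h.perm.map _).sum_eq, h.perm.length_eq]

def ShortensUpToConj (L : List ℤ) : Prop :=
  ∃ (L' : List ℤ) (j : ℤ), syllableWeight L' < syllableWeight L ∧
    IsConj (syllableWord L) (Cbraid ^ j * syllableWord L')

theorem ShortensUpToConj.of_isRotated {L L' : List ℤ} (h : L ~r L')
    (h' : ShortensUpToConj L') : ShortensUpToConj L :=
  let ⟨L'', j, hlt, hconj⟩ := h'
  ⟨L'', j, h.syllableWeight_eq ▸ hlt, (isConj_syllableWord_of_isRotated h).trans hconj⟩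

theorem shortensUpToConj_of_eq {L L' : List ℤ} (j : ℤ)
    (h : syllableWord L = Cbraid ^ j * syllableWord L')
    (hlt : syllableWeight L' < syllableWeight L) : ShortensUpToConj L :=
  ⟨L', j, hlt, h ▸ .refl _⟩

theorem shortensUpToConj_cons_zero_cons (a b : ℤ) (R : List ℤ) :
    ShortensUpToConj (a :: 0 :: b :: R) := by
  refine shortensUpToConj_of_eq 1 ?_ ?_ (L' := (a + b) :: R)
  · rw [syllableWord_cons, syllableWord_cons, ← mul_assoc, syllable_mul_syllable_zero,
      syllableWord_cons, ← mul_assoc, mul_assoc Cbraid, zpow_mul_syllable, zpow_one, mul_assoc,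
      syllableWord_cons]
  · simp only [syllableWeight_cons]; omega

theorem shortensUpToConj_of_mul_pos {a m : ℤ} (h : 0 < a * m) (T : List ℤ) :
    ShortensUpToConj (a :: m :: T) := by
  rcases pos_and_pos_or_neg_and_neg_of_mul_pos h with ⟨ha, hm⟩ | ⟨ha, hm⟩
  · refine shortensUpToConj_of_eq 0 ?_ ?_ (L' := (a - 1) :: -1 :: (m - 1) :: T)
    · rw [syllableWord_cons, syllableWord_cons, ← mul_assoc,
        syllable_mul_syllable_eq_insert_neg_one]
      simp only [syllableWord_cons, zpow_zero, one_mul, mul_assoc]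
    · simp only [syllableWeight_cons]; omega
  · refine shortensUpToConj_of_eq (-1) ?_ ?_ (L' := (a + 1) :: 1 :: (m + 1) :: T)
    · rw [syllableWord_cons, syllableWord_cons, ← mul_assoc,
        syllable_mul_syllable_eq_insert_one]
      simp only [syllableWord_cons, zpow_neg_one, mul_assoc]
    · simp only [syllableWeight_cons]; omega

theorem shortensUpToConj_singleton_of_two_le {m : ℤ} (hm : 2 ≤ m) : ShortensUpToConj [m] := by
  refine ⟨[m - 2, -1], 0, ?_, isConj_iff.mpr ⟨σ₁⁻¹, ?_⟩⟩
  · simp only [syllableWeight_cons, syllableWeight_nil]; omega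
  · simp [σ₁_inv_mul_syllable_mul_σ₁]

theorem shortensUpToConj_singleton_of_le_neg_two {m : ℤ} (hm : m ≤ -2) :
    ShortensUpToConj [m] := by
  refine ⟨[m + 2, 1], -1, ?_, isConj_iff.mpr ⟨σ₁, ?_⟩⟩
  · simp only [syllableWeight_cons, syllableWeight_nil]; omega
  · simp [σ₁_mul_syllable_mul_σ₁_inv]

theorem hasSchreierForm_or_shortensUpToConj_singleton (m : ℤ) :
    HasSchreierForm (syllableWord [m]) ∨ ShortensUpToConj [m] := by
  rcases (by omega : m ≤ -2 ∨ m = -1 ∨ m = 0 ∨ m = 1 ∨ 2 ≤ m) with h | rfl | rfl | rfl | h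
  · exact .inr (shortensUpToConj_singleton_of_le_neg_two h)
  · exact .inl hasSchreierForm_syllableWord_neg_one
  · exact .inl hasSchreierForm_syllableWord_zero
  · exact .inl hasSchreierForm_syllableWord_one
  · exact .inr (shortensUpToConj_singleton_of_two_le h)

theorem hasSchreierForm_or_shortensUpToConj_of_zero_mem {L : List ℤ} (h0 : 0 ∈ L)
    (hlen : 2 ≤ L.length) : HasSchreierForm (syllableWord L) ∨ ShortensUpToConj L := by
  obtain ⟨A, B, rfl⟩ := List.append_of_mem h0
  obtain ⟨M, a, hM⟩ : ∃ M a, B ++ A = M ++ [a] :=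
    (List.eq_nil_or_concat' (B ++ A)).resolve_left fun h => by
      obtain ⟨rfl, rfl⟩ := List.append_eq_nil_iff.mp h
      simp at hlen
  have hrot : A ++ 0 :: B ~r a :: 0 :: M := by
    refine List.isRotated_append.trans ?_
    rw [List.cons_append, hM]
    exact List.isRotated_concat a (0 :: M)
  rcases M with _ | ⟨b, R⟩
  · exact .inl ((hasSchreierForm_syllableWord_pair_zero a).of_isConj
      (isConj_syllableWord_of_isRotated hrot))
  · exact .inr ((shortensUpToConj_cons_zero_cons a b R).of_isRotated hrot)

theorem hasSchreierForm_or_shortensUpToConj_of_pos_head {x : ℤ} {M : List ℤ} (hx : 0 < x)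
    (h0 : 0 ∉ M) (hM : M ≠ []) :
    HasSchreierForm (syllableWord (x :: M)) ∨ ShortensUpToConj (x :: M) := by
  have hne {y : ℤ} (hy : y ∈ x :: M) : y ≠ 0 := by
    rintro rfl; exact h0 ((List.mem_cons.mp hy).resolve_left hx.ne)
  by_cases hchain : (x :: M).IsChain fun a b => a * b < 0
  · obtain ⟨M', z, rfl⟩ := (List.eq_nil_or_concat' M).resolve_left hM
    rcases (hne (by simp : z ∈ x :: (M' ++ [z]))).lt_or_gt with hz | hz
    · obtain ⟨pl, hpos, hpl⟩ := exists_eq_alternatingSyllables hchain (by simpa using hx)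
        (by rw [← List.cons_append, List.getLast?_concat]; simpa using hz)
      refine .inl (hpl ▸ hasSchreierForm_syllableWord_alternatingSyllables ?_ hpos)
      rintro rfl
      simp [alternatingSyllables] at hpl
    · exact .inr ((shortensUpToConj_of_mul_pos (mul_pos hz hx) M').of_isRotated
        (List.isRotated_concat z (x :: M')))
  · obtain ⟨a, b, l₁, l₂, hL, hab⟩ : ∃ a b l₁ l₂, x :: M = l₁ ++ a :: b :: l₂ ∧ ¬a * b < 0 := by
      simpa [List.isChain_iff_forall_rel_of_append_cons_cons] using hchain
    have hab' : 0 < a * b :=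
      (not_lt.mp hab).lt_of_ne (mul_ne_zero (hne (by simp [hL])) (hne (by simp [hL]))).symm
    rw [hL]
    exact .inr ((shortensUpToConj_of_mul_pos hab' _).of_isRotated List.isRotated_append)

theorem hasSchreierForm_or_shortensUpToConj_of_zero_not_mem {L : List ℤ} (h0 : 0 ∉ L)
    (hlen : 2 ≤ L.length) : HasSchreierForm (syllableWord L) ∨ ShortensUpToConj L := by
  by_cases hpos : ∃ x ∈ L, 0 < x
  · obtain ⟨x, hx, hxpos⟩ := hpos
    obtain ⟨A, B, rfl⟩ := List.append_of_mem hx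
    have hrot : A ++ x :: B ~r x :: (B ++ A) := List.isRotated_append
    have hBA : B ++ A ≠ [] := by
      rintro h; obtain ⟨rfl, rfl⟩ := List.append_eq_nil_iff.mp h; simp at hlen
    rcases hasSchreierForm_or_shortensUpToConj_of_pos_head hxpos
      (fun h => h0 (hrot.mem_iff.mpr (List.mem_cons_of_mem x h))) hBA with h | h
    · exact .inl (h.of_isConj (isConj_syllableWord_of_isRotated hrot))
    · exact .inr (h.of_isRotated hrot)
  · obtain _ | ⟨a, _ | ⟨m, T⟩⟩ := L
    all_goals simp at hlen
    simp only [not_exists, not_and, not_lt] at hpos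
    have ha : a < 0 := (hpos a (by simp)).lt_of_ne (by rintro rfl; simp at h0)
    have hm : m < 0 := (hpos m (by simp)).lt_of_ne (by rintro rfl; simp at h0)
    exact .inr (shortensUpToConj_of_mul_pos (mul_pos_of_neg_of_neg ha hm) T)

theorem hasSchreierForm_or_shortensUpToConj :
    ∀ L : List ℤ, HasSchreierForm (syllableWord L) ∨ ShortensUpToConj L
  | [] => .inl hasSchreierForm_syllableWord_nil
  | [m] => hasSchreierForm_or_shortensUpToConj_singleton m
  | a :: b :: R => by
    by_cases h0 : 0 ∈ a :: b :: R
    · exact hasSchreierForm_or_shortensUpToConj_of_zero_mem h0 (by simp)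
    · exact hasSchreierForm_or_shortensUpToConj_of_zero_not_mem h0 (by simp)

theorem hasSchreierForm_syllableWord (L : List ℤ) : HasSchreierForm (syllableWord L) := by
  induction hn : syllableWeight L using Nat.strong_induction_on generalizing L with
  | _ n ih =>
    rcases hasSchreierForm_or_shortensUpToConj L with h | ⟨L', j, hlt, hconj⟩
    · exact h
    · exact ((ih _ (hn ▸ hlt) L' rfl).Cbraid_zpow_mul j).of_isConj hconj

theorem hasSchreierForm (b : BraidGroup3) : HasSchreierForm b := by
  obtain ⟨k, L, rfl⟩ := exists_eq_Cbraid_zpow_mul_syllableWord b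
  exact (hasSchreierForm_syllableWord L).Cbraid_zpow_mul k

open scoped MatrixGroups

theorem Matrix.SpecialLinearGroup.trace_conj {n R : Type*} [Fintype n] [DecidableEq n]
    [CommRing R] (g M : SpecialLinearGroup n R) :
    ((g * M * g⁻¹ : SpecialLinearGroup n R) : Matrix n n R).trace = (M : Matrix n n R).trace := by
  rw [coe_mul, coe_mul, trace_mul_cycle, ← coe_mul, inv_mul_cancel, coe_one, Matrix.one_mul]

def toSL2 : BraidGroup3 →* SL(2, ℤ) :=
  PresentedGroup.toGroup
    (f := ![ModularGroup.T, ModularGroup.S * ModularGroup.T * ModularGroup.S⁻¹])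
    (by rintro _ rfl; simp only [map_mul, map_inv, FreeGroup.lift_apply_of]; decide)

theorem toSL2_σ₁ : toSL2 σ₁ = ModularGroup.T := PresentedGroup.toGroup.of _

theorem toSL2_σ₂ : toSL2 σ₂ = ModularGroup.S * ModularGroup.T * ModularGroup.S⁻¹ :=
  PresentedGroup.toGroup.of _

theorem toSL2_Cbraid : toSL2 Cbraid = -1 := by
  rw [Cbraid, map_pow, map_mul, toSL2_σ₁, toSL2_σ₂]; decide

def traceSq (b : BraidGroup3) : ℤ := ((toSL2 b : Matrix (Fin 2) (Fin 2) ℤ).trace) ^ 2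

theorem traceSq_eq_of_isConj {b c : BraidGroup3} (h : IsConj b c) : traceSq b = traceSq c := by
  obtain ⟨g, rfl⟩ := isConj_iff.mp h
  rw [traceSq, traceSq, map_mul, map_mul, map_inv, Matrix.SpecialLinearGroup.trace_conj]

theorem traceSq_Cbraid_zpow_mul (k : ℤ) (b : BraidGroup3) :
    traceSq (Cbraid ^ k * b) = traceSq b := by
  rw [traceSq, traceSq, map_mul, map_zpow, toSL2_Cbraid]
  rcases Int.even_or_odd k with hk | hk
  · rw [hk.neg_one_zpow, one_mul]
  · rw [hk.neg_one_zpow, neg_one_mul, Matrix.SpecialLinearGroup.coe_neg, Matrix.trace_neg, neg_sq]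

theorem toSL2_σ₁_pow_mul_σ₂_zpow_neg (p q : ℕ) :
    (toSL2 (σ₁ ^ p * σ₂ ^ (-(q : ℤ))) : Matrix (Fin 2) (Fin 2) ℤ) =
      !![1 + (p : ℤ) * q, p; q, 1] := by
  rw [map_mul, map_pow, map_zpow, toSL2_σ₁, toSL2_σ₂, conj_zpow, ← zpow_natCast ModularGroup.T p]
  simp only [Matrix.SpecialLinearGroup.coe_mul, ModularGroup.coe_T_zpow, ModularGroup.S_inv,
    Matrix.SpecialLinearGroup.coe_neg, ModularGroup.coe_S]
  simp

/-- A multiplicatively closed set of matrices with trace `≥ 3` containing the images of all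
`σ₁^p σ₂^(-q)` with `p, q ≥ 1`; it bounds the trace on the generic family. -/
def InPositiveCone (M : Matrix (Fin 2) (Fin 2) ℤ) : Prop :=
  2 ≤ M 0 0 ∧ 1 ≤ M 0 1 ∧ 1 ≤ M 1 0 ∧ 1 ≤ M 1 1

theorem InPositiveCone.mul {M N : Matrix (Fin 2) (Fin 2) ℤ} (hM : InPositiveCone M)
    (hN : InPositiveCone N) : InPositiveCone (M * N) := by
  obtain ⟨h₁, h₂, h₃, h₄⟩ := hM
  obtain ⟨g₁, g₂, g₃, g₄⟩ := hN
  simp only [InPositiveCone, Matrix.mul_apply, Fin.sum_univ_two]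
  refine ⟨?_, ?_, ?_, ?_⟩ <;> nlinarith

theorem inPositiveCone_toSL2_σ₁_pow_mul_σ₂_zpow_neg {p q : ℕ} (hp : 0 < p) (hq : 0 < q) :
    InPositiveCone (toSL2 (σ₁ ^ p * σ₂ ^ (-(q : ℤ)))) := by
  rw [toSL2_σ₁_pow_mul_σ₂_zpow_neg]
  refine ⟨?_, ?_, ?_, ?_⟩ <;> simp <;> nlinarith

theorem nine_le_traceSq_of_schreierForm_zero {c : BraidGroup3} (h : SchreierForm 0 c) :
    9 ≤ traceSq c := by
  obtain ⟨k, s, p, q, hs, hpq, rfl⟩ := h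
  have hcone : InPositiveCone
      (toSL2 ((List.range s).map fun i => σ₁ ^ p i * σ₂ ^ (-(q i : ℤ))).prod) := by
    rw [map_list_prod]
    refine List.prod_induction_nonempty (fun g : SL(2, ℤ) => InPositiveCone g)
      (fun a b ha hb => ?_) (by simpa using hs.ne') ?_
    · rw [Matrix.SpecialLinearGroup.coe_mul]; exact ha.mul hb
    · simp only [List.map_map, List.mem_map, List.mem_range, Function.comp_apply]
      rintro _ ⟨i, hi, rfl⟩
      exact inPositiveCone_toSL2_σ₁_pow_mul_σ₂_zpow_neg (hpq i hi).1 (hpq i hi).2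
  obtain ⟨h₁, -, -, h₄⟩ := hcone
  rw [traceSq_Cbraid_zpow_mul, traceSq, Matrix.trace_fin_two]
  nlinarith

def exponentSum : BraidGroup3 →* Multiplicative ℤ :=
  PresentedGroup.toGroup (f := fun _ => Multiplicative.ofAdd 1)
    (by rintro _ rfl; simp only [map_mul, map_inv, FreeGroup.lift_apply_of]; decide)

theorem exponentSum_σ₁ : exponentSum σ₁ = Multiplicative.ofAdd 1 := PresentedGroup.toGroup.of _

theorem exponentSum_σ₂ : exponentSum σ₂ = Multiplicative.ofAdd 1 := PresentedGroup.toGroup.of _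

theorem exponentSum_Cbraid_zpow_mul (k : ℤ) (b : BraidGroup3) :
    (exponentSum (Cbraid ^ k * b)).toAdd = 6 * k + (exponentSum b).toAdd := by
  have hC : exponentSum Cbraid = Multiplicative.ofAdd 6 := by
    rw [Cbraid, map_pow, map_mul, exponentSum_σ₁, exponentSum_σ₂]; rfl
  rw [map_mul, map_zpow, hC, toAdd_mul, toAdd_zpow, toAdd_ofAdd, smul_eq_mul, mul_comm]

theorem exponentSum_eq_of_isConj {b c : BraidGroup3} (h : IsConj b c) :
    exponentSum b = exponentSum c :=
  isConj_iff_eq.mp (exponentSum.map_isConj h)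

def SchreierInvariant : Fin 5 → BraidGroup3 → Prop
  | 0, b => 9 ≤ traceSq b
  | 1, b => traceSq b = 4
  | 2, b => traceSq b = 1 ∧ (exponentSum b).toAdd % 6 = 2
  | 3, b => traceSq b = 0
  | 4, b => traceSq b = 1 ∧ (exponentSum b).toAdd % 6 = 4

theorem SchreierInvariant.of_isConj {i : Fin 5} {b c : BraidGroup3} (h : SchreierInvariant i b)
    (hbc : IsConj b c) : SchreierInvariant i c := by
  fin_cases i <;>
    simpa only [SchreierInvariant, traceSq_eq_of_isConj hbc, exponentSum_eq_of_isConj hbc] using h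

theorem SchreierInvariant.unique {i j : Fin 5} {b : BraidGroup3} (hi : SchreierInvariant i b)
    (hj : SchreierInvariant j b) : i = j := by
  fin_cases i <;> fin_cases j <;> simp only [SchreierInvariant] at hi hj <;> first | rfl | omega

theorem SchreierForm.schreierInvariant {i : Fin 5} {c : BraidGroup3} (h : SchreierForm i c) :
    SchreierInvariant i c := by
  fin_cases i
  · exact nine_le_traceSq_of_schreierForm_zero h
  · obtain ⟨k, p, rfl⟩ := h
    show traceSq _ = 4
    rw [traceSq_Cbraid_zpow_mul, traceSq, map_zpow, toSL2_σ₁, ModularGroup.coe_T_zpow,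
      Matrix.trace_fin_two]
    norm_num
  · obtain ⟨k, rfl⟩ := h
    constructor
    · rw [traceSq_Cbraid_zpow_mul, traceSq, map_mul, toSL2_σ₁, toSL2_σ₂]; decide
    · rw [exponentSum_Cbraid_zpow_mul, map_mul, exponentSum_σ₁, exponentSum_σ₂]; simp
  · obtain ⟨k, rfl⟩ := h
    show traceSq _ = 0
    rw [traceSq_Cbraid_zpow_mul, traceSq]
    simp only [map_mul, toSL2_σ₁, toSL2_σ₂]; decide
  · obtain ⟨k, rfl⟩ := h
    constructor
    · rw [traceSq_Cbraid_zpow_mul, traceSq]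
      simp only [map_mul, toSL2_σ₁, toSL2_σ₂]; decide
    · rw [exponentSum_Cbraid_zpow_mul]
      simp only [map_mul, exponentSum_σ₁, exponentSum_σ₂]; simp

/-- Schreier's theorem: every 3-braid is conjugate to a braid in exactly one of the five
families of the normal form. -/
theorem stmt_10 (b : BraidGroup3) :
    ∃! i : Fin 5, ∃ c : BraidGroup3, SchreierForm i c ∧ IsConj b c := by
  obtain ⟨i, c, hc, hbc⟩ := hasSchreierForm b
  refine ⟨i, ⟨c, hc, hbc⟩, fun j ⟨c', hc', hbc'⟩ => ?_⟩
  exact (hc'.schreierInvariant.of_isConj hbc'.symm).unique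
    (hc.schreierInvariant.of_isConj hbc.symm)
end
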